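/- Let d ≥ 2, let (K_i)_{i ∈ J} be a finite family of d×d complex matrices with ∑_i K_i† K_i = I, let (σ_μ)_{μ=0}^{d²−1} be an orthonormal Hermitian basis with σ₀ = I/√d, and set Q_μ = ∑_i K_i† σ_μ K_i. Let a₁, a₂, b₁, …, b₅ be the quantities α₁, α₂, β₁, …, β₅ of the family (Q_μ)_{μ=0}^{d²−1}. Then max_{u ∈ {1,…,5}} |b_u| < max_{i,j ∈ {1,2}} |a_i · a_j|, and consequently the ratio (max_u |b_u|)^N / (max_{i,j} |a_i a_j|)^N tends to 0 as N → ∞ (exponential decay of the variance-to-mean-squared ratio for the N-fold product channel). -/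

import Mathlib

open Matrix Finset

/-- Real part of the trace of a complex matrix (the traces in question are real
for Hermitian matrices). -/
noncomputable def rtr {α : Type} [Fintype α] (M : Matrix α α ℂ) : ℝ :=
  (Matrix.trace M).re

/-- α₁ = ∑_μ (Tr R_μ)². -/
noncomputable def alpha1 {α I : Type} [Fintype α] [Fintype I]
    (R : I → Matrix α α ℂ) : ℝ := ∑ μ, (rtr (R μ)) ^ 2

/-- α₂ = ∑_μ Tr(R_μ²). -/
noncomputable def alpha2 {α I : Type} [Fintype α] [Fintype I]
    (R : I → Matrix α α ℂ) : ℝ := ∑ μ, rtr (R μ * R μ)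

/-- β₁ = ∑_{μ,ν} (Tr(R_μ R_ν))². -/
noncomputable def beta1 {α I : Type} [Fintype α] [Fintype I]
    (R : I → Matrix α α ℂ) : ℝ := ∑ μ, ∑ ν, (rtr (R μ * R ν)) ^ 2

/-- β₂ = ∑_{μ,ν} Tr(R_μ R_ν)·Tr(R_μ)·Tr(R_ν). -/
noncomputable def beta2 {α I : Type} [Fintype α] [Fintype I]
    (R : I → Matrix α α ℂ) : ℝ := ∑ μ, ∑ ν, rtr (R μ * R ν) * rtr (R μ) * rtr (R ν)

/-- β₃ = ∑_{μ,ν} Tr(R_μ R_ν²)·Tr(R_μ). -/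
noncomputable def beta3 {α I : Type} [Fintype α] [Fintype I]
    (R : I → Matrix α α ℂ) : ℝ := ∑ μ, ∑ ν, rtr (R μ * (R ν * R ν)) * rtr (R μ)

/-- β₄ = ∑_{μ,ν} Tr(R_μ² R_ν²). -/
noncomputable def beta4 {α I : Type} [Fintype α] [Fintype I]
    (R : I → Matrix α α ℂ) : ℝ := ∑ μ, ∑ ν, rtr (R μ * R μ * (R ν * R ν))

/-- β₅ = ∑_{μ,ν} Tr(R_μ R_ν R_μ R_ν). -/
noncomputable def beta5 {α I : Type} [Fintype α] [Fintype I]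
    (R : I → Matrix α α ℂ) : ℝ := ∑ μ, ∑ ν, rtr (R μ * R ν * R μ * R ν)

/-- max_{i,j ∈ {1,2}} |α_i α_j|. -/
noncomputable def maxAlpha {α I : Type} [Fintype α] [Fintype I]
    (R : I → Matrix α α ℂ) : ℝ :=
  max (max |alpha1 R * alpha1 R| |alpha1 R * alpha2 R|)
      (max |alpha2 R * alpha1 R| |alpha2 R * alpha2 R|)

/-- max_{u ∈ {1,…,5}} |β_u|. -/
noncomputable def maxBeta {α I : Type} [Fintype α] [Fintype I]
    (R : I → Matrix α α ℂ) : ℝ :=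
  max |beta1 R| (max |beta2 R| (max |beta3 R| (max |beta4 R| |beta5 R|)))

/-!
Write `s_μ = ‖Q_μ‖` (Frobenius norm), `w_μ = ‖Q_μ²‖`, `t_μ = Tr Q_μ` and `a = max α₁ α₂`, so that
`max |α_i α_j| ≥ a²` and `α₂ = ∑ s_μ²`. Cauchy–Schwarz for the trace pairing bounds the `β_u`
termwise: `|β₂| ≤ S²`, `|β₃| ≤ S W`, `|β₄|, |β₅| ≤ W²`, where `S = ∑ s_μ |t_μ|` and `W = ∑ w_μ`.
AM–GM gives `S ≤ (α₁ + α₂) / 2` and submultiplicativity `W ≤ α₂`, and both are strict because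
the channel is unital in the Heisenberg picture: `Q₀ = I/√d`, with `s₀ = 1 ≠ √d = t₀` and
`w₀ = 1/√d < 1`. Finally `β₁ ≤ α₂²`, which suffices unless `α₁ ≤ α₂`; in that case
`∑ t_ν² = α₁ ≤ α₂ < d ∑ s_ν²` yields a `Q_ν` with `t_ν² < d s_ν²`, so the entry
`Tr(Q₀ Q_ν)² = t_ν² / d` of the Gram matrix is strictly below `s₀² s_ν²`.
-/

open scoped Matrix.Norms.Frobenius

namespace Matrix

variable {𝕜 m n : Type*} [RCLike 𝕜] [Fintype m] [Fintype n]

/-- Embeds the Frobenius-normed matrices isometrically into an inner product space. -/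
noncomputable def frobeniusLp (A : Matrix m n 𝕜) : PiLp 2 fun _ : m => EuclideanSpace 𝕜 n :=
  WithLp.toLp 2 fun i => WithLp.toLp 2 (A i)

theorem norm_frobeniusLp (A : Matrix m n 𝕜) : ‖frobeniusLp A‖ = ‖A‖ := rfl

theorem inner_frobeniusLp (A B : Matrix m n 𝕜) :
    inner 𝕜 (frobeniusLp A) (frobeniusLp B) = trace (Aᴴ * B) := by
  simp only [frobeniusLp, PiLp.inner_apply, RCLike.inner_apply, trace, diag, mul_apply,
    conjTranspose_apply]
  rw [Finset.sum_comm]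
  simp [mul_comm]

theorem norm_trace_conjTranspose_mul_le (A B : Matrix m n 𝕜) :
    ‖trace (Aᴴ * B)‖ ≤ ‖A‖ * ‖B‖ := by
  rw [← inner_frobeniusLp]
  exact norm_inner_le_norm _ _

theorem frobenius_norm_sq_eq_re_trace (A : Matrix m n 𝕜) :
    ‖A‖ ^ 2 = RCLike.re (trace (Aᴴ * A)) := by
  rw [← inner_frobeniusLp, ← norm_frobeniusLp]
  exact (inner_self_eq_norm_sq _).symm

theorem norm_trace_mul_le (A : Matrix m n 𝕜) (B : Matrix n m 𝕜) :
    ‖trace (A * B)‖ ≤ ‖A‖ * ‖B‖ := by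
  simpa using norm_trace_conjTranspose_mul_le Aᴴ B

theorem frobenius_norm_one [DecidableEq m] : ‖(1 : Matrix m m 𝕜)‖ = √(Fintype.card m) := by
  simpa using congrArg NNReal.toReal (frobenius_nnnorm_one (n := m) (α := 𝕜))

end Matrix

section rtr

variable {m : Type} [Fintype m]

theorem rtr_real_smul (r : ℝ) (A : Matrix m m ℂ) : rtr ((r : ℂ) • A) = r * rtr A := by
  simp [rtr, trace_smul]

theorem abs_rtr_mul_le (A B : Matrix m m ℂ) : |rtr (A * B)| ≤ ‖A‖ * ‖B‖ :=
  (Complex.abs_re_le_norm _).trans (norm_trace_mul_le A B)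

theorem Matrix.IsHermitian.rtr_mul_self {A : Matrix m m ℂ} (hA : A.IsHermitian) :
    rtr (A * A) = ‖A‖ ^ 2 := by
  rw [frobenius_norm_sq_eq_re_trace, hA.eq]
  rfl

theorem Matrix.IsHermitian.norm_mul_sq {A B : Matrix m m ℂ} (hA : A.IsHermitian)
    (hB : B.IsHermitian) : ‖A * B‖ ^ 2 = rtr (A * A * (B * B)) := by
  rw [frobenius_norm_sq_eq_re_trace, conjTranspose_mul, hA.eq, hB.eq, Matrix.mul_assoc,
    trace_mul_comm]
  simp only [rtr, Matrix.mul_assoc]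
  rfl

theorem Matrix.IsHermitian.abs_rtr_mul_mul_mul_mul_le {A B : Matrix m m ℂ} (hA : A.IsHermitian)
    (hB : B.IsHermitian) : |rtr (A * B * A * B)| ≤ ‖A * A‖ * ‖B * B‖ := by
  calc |rtr (A * B * A * B)| ≤ ‖A * B‖ * ‖A * B‖ := by
        simpa only [Matrix.mul_assoc] using abs_rtr_mul_le (A * B) (A * B)
    _ = rtr (A * A * (B * B)) := by rw [← sq, hA.norm_mul_sq hB]
    _ ≤ ‖A * A‖ * ‖B * B‖ := (le_abs_self _).trans (abs_rtr_mul_le _ _)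

end rtr

theorem abs_sum_sum_le_mul_sum {ι κ : Type*} [Fintype ι] [Fintype κ] {F : ι → κ → ℝ}
    {f : ι → ℝ} {g : κ → ℝ} (hF : ∀ i k, |F i k| ≤ f i * g k) :
    |∑ i, ∑ k, F i k| ≤ (∑ i, f i) * ∑ k, g k := by
  rw [Finset.sum_mul_sum]
  refine (abs_sum_le_sum_abs _ _).trans (sum_le_sum fun i _ => ?_)
  exact (abs_sum_le_sum_abs _ _).trans (sum_le_sum fun k _ => hF i k)

theorem tendsto_pow_div_pow_of_lt {a b : ℝ} (hb : 0 ≤ b) (hab : b < a) :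
    Filter.Tendsto (fun N : ℕ => b ^ N / a ^ N) Filter.atTop (nhds 0) := by
  simpa only [div_pow] using tendsto_pow_atTop_nhds_zero_of_lt_one
    (div_nonneg hb (hb.trans hab.le)) ((div_lt_one (hb.trans_lt hab)).2 hab)

section Family

variable {m ι : Type} [Fintype m] [Fintype ι]

theorem sq_max_alpha_le_maxAlpha (R : ι → Matrix m m ℂ) :
    max (alpha1 R) (alpha2 R) ^ 2 ≤ maxAlpha R := by
  rcases max_choice (alpha1 R) (alpha2 R) with h | h <;> simp [h, maxAlpha, sq]

theorem maxBeta_nonneg (R : ι → Matrix m m ℂ) : 0 ≤ maxBeta R :=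
  (abs_nonneg _).trans (le_max_left _ _)

theorem beta1_nonneg (R : ι → Matrix m m ℂ) : 0 ≤ beta1 R := by
  unfold beta1
  positivity

variable (Q : ι → Matrix m m ℂ)

theorem abs_beta2_le : |beta2 Q| ≤ (∑ μ, ‖Q μ‖ * |rtr (Q μ)|) ^ 2 := by
  rw [sq]
  refine abs_sum_sum_le_mul_sum fun μ ν => ?_
  rw [abs_mul, abs_mul]
  calc |rtr (Q μ * Q ν)| * |rtr (Q μ)| * |rtr (Q ν)|
      ≤ ‖Q μ‖ * ‖Q ν‖ * |rtr (Q μ)| * |rtr (Q ν)| := by gcongr; exact abs_rtr_mul_le _ _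
    _ = ‖Q μ‖ * |rtr (Q μ)| * (‖Q ν‖ * |rtr (Q ν)|) := by ring

theorem abs_beta3_le :
    |beta3 Q| ≤ (∑ μ, ‖Q μ‖ * |rtr (Q μ)|) * ∑ μ, ‖Q μ * Q μ‖ := by
  refine abs_sum_sum_le_mul_sum fun μ ν => ?_
  rw [abs_mul]
  calc |rtr (Q μ * (Q ν * Q ν))| * |rtr (Q μ)| ≤ ‖Q μ‖ * ‖Q ν * Q ν‖ * |rtr (Q μ)| := by
        gcongr; exact abs_rtr_mul_le _ _
    _ = ‖Q μ‖ * |rtr (Q μ)| * ‖Q ν * Q ν‖ := by ring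

theorem abs_beta4_le : |beta4 Q| ≤ (∑ μ, ‖Q μ * Q μ‖) ^ 2 := by
  rw [sq]
  exact abs_sum_sum_le_mul_sum fun μ ν => abs_rtr_mul_le _ _

variable {Q}

theorem abs_beta5_le (hQ : ∀ μ, (Q μ).IsHermitian) : |beta5 Q| ≤ (∑ μ, ‖Q μ * Q μ‖) ^ 2 := by
  rw [sq]
  exact abs_sum_sum_le_mul_sum fun μ ν => (hQ μ).abs_rtr_mul_mul_mul_mul_le (hQ ν)

theorem alpha2_eq_sum_sq_norm (hQ : ∀ μ, (Q μ).IsHermitian) : alpha2 Q = ∑ μ, ‖Q μ‖ ^ 2 :=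
  sum_congr rfl fun μ _ => (hQ μ).rtr_mul_self

theorem sq_rtr_mul_le (A B : Matrix m m ℂ) : rtr (A * B) ^ 2 ≤ ‖A‖ ^ 2 * ‖B‖ ^ 2 := by
  rw [← mul_pow, ← sq_abs]
  exact pow_le_pow_left₀ (abs_nonneg _) (abs_rtr_mul_le A B) 2

variable (Q) in
theorem beta1_le : beta1 Q ≤ (∑ μ, ‖Q μ‖ ^ 2) ^ 2 := by
  rw [beta1, sq, sum_mul_sum]
  exact sum_le_sum fun μ _ => sum_le_sum fun ν _ => sq_rtr_mul_le _ _

theorem beta1_lt (μ ν : ι) (h : rtr (Q μ * Q ν) ^ 2 < ‖Q μ‖ ^ 2 * ‖Q ν‖ ^ 2) :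
    beta1 Q < (∑ μ, ‖Q μ‖ ^ 2) ^ 2 := by
  rw [beta1, sq, sum_mul_sum]
  refine sum_lt_sum (fun μ _ => sum_le_sum fun ν _ => sq_rtr_mul_le _ _) ⟨μ, mem_univ _, ?_⟩
  exact sum_lt_sum (fun ν _ => sq_rtr_mul_le _ _) ⟨ν, mem_univ _, h⟩

end Family

section NormalizedOne

variable (m : Type) [Fintype m] [DecidableEq m]

/-- The paper's `σ₀ = I / √d`. -/
noncomputable def normalizedOne : Matrix m m ℂ := ((√(Fintype.card m) : ℂ))⁻¹ • 1

theorem normalizedOne_eq_real_smul :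
    normalizedOne m = (((√(Fintype.card m))⁻¹ : ℝ) : ℂ) • 1 := by
  rw [normalizedOne, Complex.ofReal_inv]

variable {m}

theorem rtr_normalizedOne_mul (B : Matrix m m ℂ) :
    rtr (normalizedOne m * B) = (√(Fintype.card m))⁻¹ * rtr B := by
  rw [normalizedOne_eq_real_smul, smul_mul_assoc, one_mul, rtr_real_smul]

theorem rtr_normalizedOne : rtr (normalizedOne m) = √(Fintype.card m) := by
  rw [← mul_one (normalizedOne m), rtr_normalizedOne_mul, inv_mul_eq_div, ← Real.div_sqrt]
  simp [rtr]

variable [Nonempty m]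

theorem norm_normalizedOne : ‖normalizedOne m‖ = 1 := by
  have hd : (0 : ℝ) < √(Fintype.card m) := Real.sqrt_pos.2 (by exact_mod_cast Fintype.card_pos)
  rw [normalizedOne_eq_real_smul, norm_smul, frobenius_norm_one,
    Complex.norm_of_nonneg (by positivity), inv_mul_cancel₀ hd.ne']

theorem norm_normalizedOne_mul_self :
    ‖normalizedOne m * normalizedOne m‖ = (√(Fintype.card m))⁻¹ := by
  have hd : (0 : ℝ) < √(Fintype.card m) := Real.sqrt_pos.2 (by exact_mod_cast Fintype.card_pos)
  rw [normalizedOne_eq_real_smul, smul_mul_smul, one_mul, ← Complex.ofReal_mul, norm_smul,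
    frobenius_norm_one, Complex.norm_of_nonneg (by positivity)]
  field_simp

end NormalizedOne

theorem one_lt_sqrt_card {m : Type*} [Fintype m] (hm : 2 ≤ Fintype.card m) :
    1 < √(Fintype.card m : ℝ) :=
  Real.lt_sqrt_of_sq_lt (by norm_num; exact_mod_cast hm)

section MainEstimate

variable {m ι : Type} [Fintype m] [DecidableEq m] [Fintype ι] {Q : ι → Matrix m m ℂ}
  (hQ : ∀ μ, (Q μ).IsHermitian) {z : ι} (hz : Q z = normalizedOne m)
  (hm : 2 ≤ Fintype.card m)

include hQ hz hm

theorem sum_norm_mul_abs_rtr_lt :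
    ∑ μ, ‖Q μ‖ * |rtr (Q μ)| < max (alpha1 Q) (alpha2 Q) := by
  have : Nonempty m := Fintype.card_pos_iff.1 (by omega)
  have hsqrt := one_lt_sqrt_card hm
  have hamgm : ∑ μ, ‖Q μ‖ * |rtr (Q μ)| < ∑ μ, (‖Q μ‖ ^ 2 + rtr (Q μ) ^ 2) / 2 := by
    refine sum_lt_sum (fun μ _ => ?_) ⟨z, mem_univ _, ?_⟩
    · nlinarith [two_mul_le_add_sq ‖Q μ‖ |rtr (Q μ)|, sq_abs (rtr (Q μ))]
    · rw [hz, norm_normalizedOne, rtr_normalizedOne, abs_of_pos (by positivity)]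
      nlinarith
  calc _ < _ := hamgm
    _ = (alpha2 Q + alpha1 Q) / 2 := by
      rw [alpha2_eq_sum_sq_norm hQ, alpha1, ← sum_add_distrib, sum_div]
    _ ≤ max (alpha1 Q) (alpha2 Q) := by
      linarith [le_max_left (alpha1 Q) (alpha2 Q), le_max_right (alpha1 Q) (alpha2 Q)]

theorem sum_norm_mul_self_lt_alpha2 : ∑ μ, ‖Q μ * Q μ‖ < alpha2 Q := by
  have : Nonempty m := Fintype.card_pos_iff.1 (by omega)
  have hsqrt := one_lt_sqrt_card hm
  rw [alpha2_eq_sum_sq_norm hQ]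
  refine sum_lt_sum (fun μ _ => sq (‖Q μ‖) ▸ frobenius_norm_mul _ _) ⟨z, mem_univ _, ?_⟩
  rw [hz, norm_normalizedOne_mul_self, norm_normalizedOne, one_pow]
  exact inv_lt_one_of_one_lt₀ hsqrt

theorem beta1_lt_sq_max : beta1 Q < max (alpha1 Q) (alpha2 Q) ^ 2 := by
  have : Nonempty m := Fintype.card_pos_iff.1 (by omega)
  have hd : (2 : ℝ) ≤ Fintype.card m := by exact_mod_cast hm
  have hα₂ : 1 ≤ alpha2 Q := by
    rw [alpha2_eq_sum_sq_norm hQ]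
    simpa [hz, norm_normalizedOne] using single_le_sum (fun μ _ => sq_nonneg ‖Q μ‖) (mem_univ z)
  rcases lt_or_ge (alpha2 Q) (alpha1 Q) with h | h
  · calc beta1 Q ≤ alpha2 Q ^ 2 := alpha2_eq_sum_sq_norm hQ ▸ beta1_le Q
      _ < alpha1 Q ^ 2 := pow_lt_pow_left₀ h (by linarith) two_ne_zero
      _ ≤ max (alpha1 Q) (alpha2 Q) ^ 2 := pow_le_pow_left₀ (by linarith) (le_max_left _ _) 2
  obtain ⟨ν, -, hν⟩ : ∃ ν ∈ univ, rtr (Q ν) ^ 2 < Fintype.card m * ‖Q ν‖ ^ 2 := by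
    refine exists_lt_of_sum_lt ?_
    rw [← mul_sum, ← alpha2_eq_sum_sq_norm hQ]
    calc alpha1 Q ≤ alpha2 Q := h
      _ < Fintype.card m * alpha2 Q := by nlinarith
  rw [max_eq_right h, alpha2_eq_sum_sq_norm hQ]
  refine beta1_lt z ν ?_
  rw [hz, rtr_normalizedOne_mul, norm_normalizedOne, mul_pow, inv_pow,
    Real.sq_sqrt (by positivity), one_pow, one_mul, inv_mul_lt_iff₀ (by positivity)]
  exact hν

theorem maxBeta_lt_maxAlpha : maxBeta Q < maxAlpha Q := by
  set a := max (alpha1 Q) (alpha2 Q)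
  set S := ∑ μ, ‖Q μ‖ * |rtr (Q μ)|
  set W := ∑ μ, ‖Q μ * Q μ‖
  have hS : S < a := sum_norm_mul_abs_rtr_lt hQ hz hm
  have hW : W < a := (sum_norm_mul_self_lt_alpha2 hQ hz hm).trans_le (le_max_right _ _)
  have hS₀ : 0 ≤ S := by positivity
  have hW₀ : 0 ≤ W := by positivity
  have hSS : S ^ 2 < a ^ 2 := pow_lt_pow_left₀ hS hS₀ two_ne_zero
  have hSW : S * W < a ^ 2 := sq a ▸ mul_lt_mul'' hS hW hS₀ hW₀
  have hWW : W ^ 2 < a ^ 2 := pow_lt_pow_left₀ hW hW₀ two_ne_zero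
  have hβ₁ : |beta1 Q| < a ^ 2 := by
    rw [abs_of_nonneg (beta1_nonneg Q)]
    exact beta1_lt_sq_max hQ hz hm
  refine (max_lt hβ₁ <| max_lt ((abs_beta2_le Q).trans_lt hSS) <|
    max_lt ((abs_beta3_le Q).trans_lt hSW) <|
    max_lt ((abs_beta4_le Q).trans_lt hWW) ((abs_beta5_le hQ).trans_lt hWW)).trans_le ?_
  exact sq_max_alpha_le_maxAlpha Q

end MainEstimate

section Channel

variable {m n J α : Type*} [Fintype m] [Fintype J]

theorem isHermitian_sum_conjTranspose_mul_mul [NonUnitalSemiring α] [StarRing α]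
    (K : J → Matrix m n α) {A : Matrix m m α} (hA : A.IsHermitian) :
    (∑ i, (K i)ᴴ * A * K i).IsHermitian :=
  isSelfAdjoint_sum _ fun i _ => isHermitian_conjTranspose_mul_mul (K i) hA

theorem sum_conjTranspose_mul_smul_one_mul [DecidableEq m] [DecidableEq n] [CommSemiring α]
    [StarRing α] {K : J → Matrix m n α} (hK : ∑ i, (K i)ᴴ * K i = 1) (c : α) :
    ∑ i, (K i)ᴴ * (c • (1 : Matrix m m α)) * K i = c • 1 := by
  simp only [Matrix.mul_smul, Matrix.smul_mul, Matrix.mul_one, ← smul_sum, hK]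

end Channel

/-- For a single-qudit channel (d ≥ 2) with Kraus operators (K_i), orthonormal
Hermitian basis (σ_μ) containing σ₀ = I/√d, and Q_μ = ∑_i K_i† σ_μ K_i:
max_u |b_u| < max_{i,j} |a_i a_j|, and consequently
(max_u |b_u|)^N / (max_{i,j} |a_i a_j|)^N → 0 as N → ∞. -/
theorem qudit_channel_typicality {d : ℕ} (hd : 2 ≤ d) {J : Type} [Fintype J]
    (K : J → Matrix (Fin d) (Fin d) ℂ)
    (hK : ∑ i, (K i)ᴴ * K i = 1)
    (σ : Fin (d * d) → Matrix (Fin d) (Fin d) ℂ)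
    (hσHerm : ∀ μ, (σ μ).IsHermitian)
    (hσ0 : σ ⟨0, by positivity⟩ = ((Real.sqrt d : ℂ))⁻¹ • (1 : Matrix (Fin d) (Fin d) ℂ)) :
    maxBeta (fun μ => ∑ i, (K i)ᴴ * σ μ * K i) <
        maxAlpha (fun μ => ∑ i, (K i)ᴴ * σ μ * K i) ∧
      Filter.Tendsto
        (fun N : ℕ => (maxBeta (fun μ => ∑ i, (K i)ᴴ * σ μ * K i)) ^ N /
          (maxAlpha (fun μ => ∑ i, (K i)ᴴ * σ μ * K i)) ^ N)
        Filter.atTop (nhds 0) := by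
  set Q := fun μ => ∑ i, (K i)ᴴ * σ μ * K i
  have hQ : ∀ μ, (Q μ).IsHermitian := fun μ => isHermitian_sum_conjTranspose_mul_mul K (hσHerm μ)
  have hQ₀ : Q ⟨0, by positivity⟩ = normalizedOne (Fin d) := by
    simp only [Q, hσ0, sum_conjTranspose_mul_smul_one_mul hK, normalizedOne, Fintype.card_fin]
  have hlt := maxBeta_lt_maxAlpha hQ hQ₀ (by rwa [Fintype.card_fin])
  exact ⟨hlt, tendsto_pow_div_pow_of_lt (maxBeta_nonneg Q) hlt⟩
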